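/- Let f : ℝ → ℝ be the unique solution of f'' = -2f³ with f(0) = 0, f'(0) = 1, let K = ∫₀¹ dx/√(1 - x⁴), let λ > 0, μ > 0, and set ω = (λ/2)^{1/4} μ and φ₀(t) = μ (2/λ)^{1/4} f(ω t + K). Then h(t) = (1/(μ (8λ)^{1/4})) f'(ω t + K) satisfies h'' + 3λ φ₀² h = 0 for all t, with initial conditions h(0) = 0 and h'(0) = -1. -/

import Mathlib

/-!
`f` is the lemniscate sine and `K` is half the lemniscate constant. The energy `f'² + f⁴` is
conserved, so on the first arch, where `f' > 0`, we have `f' = √(1 - f⁴)`; hence the lemniscatic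
arcsine `arcsl y = ∫₀^y dx/√(1 - x⁴)` satisfies `(arcsl ∘ f)' = 1`, i.e. `arcsl (f u) = u`. At the
first zero `T` of `f'` the energy forces `f T = 1`, so `T = arcsl 1 = K`, which gives `f K = 1` and
`f' K = 0`, i.e. the initial data of `h`. Differentiating `f'' = -2f³` shows that `t ↦ f'(ωt + K)`
solves the linearized equation `ψ'' + 6ω² f(ωt + K)² ψ = 0`, and with `x = (λ/2)^{1/4}` all the
constants reduce to `λ = 2x⁴`, `(2/λ)^{1/4} = x⁻¹`, `(8λ)^{1/4} = 2x`.
-/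

open Set MeasureTheory

lemma pos_on_Ico_of_ne_zero {g : ℝ → ℝ} (hg : Continuous g) {a b : ℝ} (ha : 0 < g a)
    (hne : ∀ u ∈ Ico a b, g u ≠ 0) : ∀ u ∈ Ico a b, 0 < g u := by
  intro u hu
  by_contra! hu0
  obtain ⟨w, hw, hw0⟩ := intermediate_value_Icc' hu.1 hg.continuousOn ⟨hu0, ha.le⟩
  exact hne w ⟨hw.1, hw.2.trans_lt hu.2⟩ hw0

lemma HasDerivAt.comp_mul_add {g : ℝ → ℝ} {g' ω K t : ℝ} (hg : HasDerivAt g g' (ω * t + K)) :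
    HasDerivAt (fun t => g (ω * t + K)) (g' * ω) t := by
  have h := hg.comp t (((hasDerivAt_id t).const_mul ω).add_const K)
  rwa [mul_one] at h

noncomputable def arcsl (y : ℝ) : ℝ := ∫ x in (0 : ℝ)..y, 1 / √(1 - x ^ 4)

lemma arcsl_zero : arcsl 0 = 0 := intervalIntegral.integral_same

lemma intervalIntegrable_one_div_sqrt_one_sub_pow_four_zero_one :
    IntervalIntegrable (fun x : ℝ => 1 / √(1 - x ^ 4)) volume 0 1 := by
  have hmaj : IntervalIntegrable (fun x : ℝ => (1 - x) ^ (-(1 / 2) : ℝ)) volume 0 1 := by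
    simpa using ((intervalIntegral.intervalIntegrable_rpow' (a := 0) (b := 1) (r := -(1 / 2))
      (by norm_num)).comp_sub_left 1).symm
  rw [intervalIntegrable_iff_integrableOn_Ioo_of_le zero_le_one] at hmaj ⊢
  refine hmaj.mono' (Measurable.aestronglyMeasurable (by fun_prop)) ?_
  filter_upwards [ae_restrict_mem measurableSet_Ioo] with x ⟨hx0, hx1⟩
  have hx4 : x ^ 4 ≤ x := pow_le_of_le_one hx0.le hx1.le (by norm_num)
  rw [Real.norm_of_nonneg (by positivity), Real.rpow_neg (by linarith), ← Real.sqrt_eq_rpow,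
    one_div]
  gcongr

lemma intervalIntegrable_one_div_sqrt_one_sub_pow_four :
    IntervalIntegrable (fun x : ℝ => 1 / √(1 - x ^ 4)) volume (-1) 1 := by
  have h := intervalIntegrable_one_div_sqrt_one_sub_pow_four_zero_one
  have hneg : IntervalIntegrable (fun x : ℝ => 1 / √(1 - x ^ 4)) volume (-1) 0 := by
    simpa [Even.neg_pow (by decide : Even 4)] using ((IntervalIntegrable.iff_comp_neg).1 h).symm
  exact hneg.trans h

lemma hasDerivAt_arcsl {y : ℝ} (hy : y ∈ Ioo (-1 : ℝ) 1) :
    HasDerivAt arcsl (1 / √(1 - y ^ 4)) y := by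
  have hcont : ContinuousOn (fun x : ℝ => 1 / √(1 - x ^ 4)) (Ioo (-1) 1) := by
    refine continuousOn_const.div (by fun_prop) fun x hx => ?_
    have : |x| ^ 4 < 1 := pow_lt_one₀ (abs_nonneg x) (abs_lt.mpr hx) (by norm_num)
    rw [Even.pow_abs (by decide)] at this
    exact (Real.sqrt_pos.mpr (by linarith)).ne'
  have hsub : uIcc 0 y ⊆ Ioo (-1) 1 :=
    (ordConnected_Ioo).uIcc_subset ⟨by norm_num, by norm_num⟩ hy
  exact intervalIntegral.integral_hasDerivAt_right ((hcont.mono hsub).intervalIntegrable)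
    (hcont.stronglyMeasurableAtFilter isOpen_Ioo y hy) (hcont.continuousAt (isOpen_Ioo.mem_nhds hy))

lemma continuousOn_arcsl : ContinuousOn arcsl (Icc (-1) 1) := by
  have h := intervalIntegral.continuousOn_primitive_interval'
    intervalIntegrable_one_div_sqrt_one_sub_pow_four (a := 0) (by simp)
  rwa [uIcc_of_le (by norm_num)] at h

lemma monotoneOn_arcsl : MonotoneOn arcsl (Icc (-1) 1) := by
  refine monotoneOn_of_deriv_nonneg (convex_Icc _ _) continuousOn_arcsl
    (fun y hy => ?_) (fun y hy => ?_) <;> rw [interior_Icc] at hy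
  · exact (hasDerivAt_arcsl hy).differentiableAt.differentiableWithinAt
  · rw [(hasDerivAt_arcsl hy).deriv]
    positivity

section LemniscaticEquation

variable {f : ℝ → ℝ} {c ω K : ℝ}

lemma deriv_sq_add_pow_four_eq (hd : Differentiable ℝ f) (hd' : Differentiable ℝ (deriv f))
    (hODE : ∀ u, deriv (deriv f) u = -2 * f u ^ 3) (u : ℝ) :
    deriv f u ^ 2 + f u ^ 4 = deriv f 0 ^ 2 + f 0 ^ 4 := by
  refine is_const_of_deriv_eq_zero ((hd'.pow 2).add (hd.pow 4)) (fun v => ?_) u 0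
  have hE := ((hd' v).hasDerivAt.pow 2).add ((hd v).hasDerivAt.pow 4)
  rw [hE.deriv, hODE]
  ring

lemma mem_Ioo_of_deriv_ne_zero {u : ℝ} (henergy : deriv f u ^ 2 + f u ^ 4 = 1)
    (hne : deriv f u ≠ 0) : f u ∈ Ioo (-1) 1 := by
  have h : |f u| ^ 4 < 1 := by
    rw [Even.pow_abs (by decide)]
    nlinarith [pow_pos (sq_pos_of_ne_zero hne) 1]
  exact abs_lt.mp ((pow_lt_one_iff_of_nonneg (abs_nonneg _) (by norm_num)).mp h)

lemma mem_Icc_of_deriv_sq_add_pow_four_eq_one {u : ℝ}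
    (henergy : deriv f u ^ 2 + f u ^ 4 = 1) : f u ∈ Icc (-1) 1 := by
  have h : |f u| ^ 4 ≤ 1 := by
    rw [Even.pow_abs (by decide)]
    nlinarith [sq_nonneg (deriv f u)]
  exact abs_le.mp ((pow_le_one_iff_of_nonneg (abs_nonneg _) (by norm_num)).mp h)

lemma hasDerivAt_arcsl_comp {u : ℝ} (hfu : DifferentiableAt ℝ f u)
    (henergy : deriv f u ^ 2 + f u ^ 4 = 1) (hpos : 0 < deriv f u) :
    HasDerivAt (fun v => arcsl (f v)) 1 u := by
  have hsqrt : √(1 - f u ^ 4) = deriv f u := by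
    rw [← henergy, add_sub_cancel_right, Real.sqrt_sq hpos.le]
  have h := (hasDerivAt_arcsl (mem_Ioo_of_deriv_ne_zero henergy hpos.ne')).comp u hfu.hasDerivAt
  rwa [hsqrt, one_div_mul_cancel hpos.ne'] at h

lemma arcsl_comp_eq_of_deriv_pos (hd : Differentiable ℝ f)
    (henergy : ∀ u, deriv f u ^ 2 + f u ^ 4 = 1) (h0 : f 0 = 0) {b : ℝ} (hb : 0 ≤ b)
    (hpos : ∀ u ∈ Ico 0 b, 0 < deriv f u) : arcsl (f b) = b := by
  refine eq_of_has_deriv_right_eq (f' := fun _ => 1) (g := id)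
    (fun u hu => (hasDerivAt_arcsl_comp (hd u) (henergy u) (hpos u hu)).hasDerivWithinAt)
    (fun u _ => (hasDerivAt_id u).hasDerivWithinAt)
    (continuousOn_arcsl.comp hd.continuous.continuousOn
      fun u _ => mem_Icc_of_deriv_sq_add_pow_four_eq_one (henergy u))
    continuousOn_id ?_ b ⟨hb, le_rfl⟩
  rw [h0, arcsl_zero, id]

lemma apply_arcsl_one_eq_one (hd : Differentiable ℝ f) (hcont : Continuous (deriv f))
    (henergy : ∀ u, deriv f u ^ 2 + f u ^ 4 = 1) (h0 : f 0 = 0) (h1 : 0 < deriv f 0) :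
    f (arcsl 1) = 1 ∧ deriv f (arcsl 1) = 0 := by
  set S := {u : ℝ | 0 ≤ u ∧ deriv f u = 0}
  have hSbdd : BddBelow S := ⟨0, fun _ hu => hu.1⟩
  have hpos (b : ℝ) (hb : ∀ u ∈ Ico 0 b, u ∉ S) : ∀ u ∈ Ico 0 b, 0 < deriv f u :=
    pos_on_Ico_of_ne_zero hcont h1 fun u hu h => hb u hu ⟨hu.1, h⟩
  have harcsl_le (u : ℝ) : arcsl (f u) ≤ arcsl 1 :=
    monotoneOn_arcsl (mem_Icc_of_deriv_sq_add_pow_four_eq_one (henergy u))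
      ⟨by norm_num, le_rfl⟩ (mem_Icc_of_deriv_sq_add_pow_four_eq_one (henergy u)).2
  -- otherwise `arcsl (f b) = b` for every `b ≥ 0`, while `arcsl (f b) ≤ arcsl 1`
  have hS : S.Nonempty := by
    by_contra! hS
    have hK : 0 ≤ arcsl 1 := by simpa [h0, arcsl_zero] using harcsl_le 0
    have hb := arcsl_comp_eq_of_deriv_pos hd henergy h0 (b := arcsl 1 + 1) (by linarith)
      (hpos _ fun u _ => by simp [hS])
    linarith [harcsl_le (arcsl 1 + 1)]
  set T := sInf S
  have hSclosed : IsClosed S :=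
    (isClosed_le continuous_const continuous_id).inter (isClosed_eq hcont continuous_const)
  have hTS : T ∈ S := hSclosed.csInf_mem hS hSbdd
  have hT0 : T ≠ 0 := fun h => h1.ne' (h ▸ hTS.2)
  have hfT := arcsl_comp_eq_of_deriv_pos hd henergy h0 hTS.1
    (hpos T fun u hu huS => (csInf_le hSbdd huS).not_gt hu.2)
  have hfT4 : |f T| ^ 4 = 1 := by
    rw [Even.pow_abs (by decide)]
    simpa [hTS.2] using henergy T
  rcases (abs_eq zero_le_one).mp ((pow_eq_one_iff_of_nonneg (abs_nonneg _) (by norm_num)).mp hfT4)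
    with hfT1 | hfT1
  · rw [show arcsl 1 = T from hfT1 ▸ hfT]
    exact ⟨hfT1, hTS.2⟩
  · have := monotoneOn_arcsl (a := -1) (b := 0) ⟨le_rfl, by norm_num⟩ ⟨by norm_num, by norm_num⟩
      (by norm_num)
    rw [arcsl_zero, ← hfT1, hfT] at this
    exact absurd (le_antisymm this hTS.1) hT0

lemma hasDerivAt_const_mul_deriv_comp_mul_add (hd' : Differentiable ℝ (deriv f))
    (hODE : ∀ u, deriv (deriv f) u = -2 * f u ^ 3) (t : ℝ) :
    HasDerivAt (fun t => c * deriv f (ω * t + K)) (-2 * c * ω * f (ω * t + K) ^ 3) t := by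
  have h := ((hd' (ω * t + K)).hasDerivAt.comp_mul_add (t := t)).const_mul c
  rw [hODE] at h
  exact h.congr_deriv (by ring)

lemma deriv_deriv_const_mul_deriv_comp_mul_add (hd : Differentiable ℝ f)
    (hd' : Differentiable ℝ (deriv f)) (hODE : ∀ u, deriv (deriv f) u = -2 * f u ^ 3) (t : ℝ) :
    deriv (deriv fun t => c * deriv f (ω * t + K)) t =
      -6 * c * ω ^ 2 * f (ω * t + K) ^ 2 * deriv f (ω * t + K) := by
  have hfirst :
      deriv (fun t => c * deriv f (ω * t + K)) = fun t => -2 * c * ω * f (ω * t + K) ^ 3 :=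
    funext fun t => (hasDerivAt_const_mul_deriv_comp_mul_add hd' hODE t).deriv
  have h : HasDerivAt (fun t => -2 * c * ω * f (ω * t + K) ^ 3)
      (-2 * c * ω * (3 * f (ω * t + K) ^ 2 * (deriv f (ω * t + K) * ω))) t :=
    (((hd (ω * t + K)).hasDerivAt.comp_mul_add (t := t)).fun_pow 3).const_mul _
  rw [hfirst, h.deriv]
  ring

end LemniscaticEquation

/-- With `f` the unique solution of `f'' = -2f³`, `f(0)=0`, `f'(0)=1`,
`K = ∫₀¹ dx/√(1-x⁴)`, `ω = (λ/2)^{1/4}μ` and `φ₀(t) = μ(2/λ)^{1/4} f(ωt + K)`,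
the function `h(t) = f'(ωt + K)/(μ(8λ)^{1/4})` solves `h'' + 3λφ₀²h = 0` with
`h(0) = 0` and `h'(0) = -1` (Green's function data of the fluctuation operator). -/
theorem two_point_function_rest_frame
    (f : ℝ → ℝ) (hf : ContDiff ℝ 2 f)
    (hODE : ∀ u : ℝ, deriv (deriv f) u = -2 * f u ^ 3)
    (h0 : f 0 = 0) (h1 : deriv f 0 = 1)
    (K : ℝ) (hK : K = ∫ x in (0:ℝ)..1, 1 / Real.sqrt (1 - x ^ 4))
    (lam μ : ℝ) (hlam : 0 < lam) (hμ : 0 < μ)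
    (ω : ℝ) (hω : ω = (lam / 2) ^ ((1 : ℝ) / 4) * μ)
    (φ₀ h : ℝ → ℝ)
    (hφ₀ : ∀ t : ℝ, φ₀ t = μ * (2 / lam) ^ ((1 : ℝ) / 4) * f (ω * t + K))
    (hh : ∀ t : ℝ, h t = (1 / (μ * (8 * lam) ^ ((1 : ℝ) / 4))) * deriv f (ω * t + K)) :
    (∀ t : ℝ, deriv (deriv h) t + 3 * lam * φ₀ t ^ 2 * h t = 0) ∧
    h 0 = 0 ∧ deriv h 0 = -1 := by
  have hd := hf.differentiable (by norm_num)
  have hd' := hf.differentiable_deriv_two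
  have henergy (u : ℝ) : deriv f u ^ 2 + f u ^ 4 = 1 := by
    rw [deriv_sq_add_pow_four_eq hd hd' hODE u, h0, h1]
    norm_num
  obtain ⟨hfK, hfK'⟩ : f K = 1 ∧ deriv f K = 0 :=
    hK ▸ apply_arcsl_one_eq_one hd hd'.continuous henergy h0 (h1 ▸ one_pos)
  obtain rfl : h = fun t => _ := funext hh
  set x := (lam / 2) ^ ((1 : ℝ) / 4) with hx
  have hx0 : 0 < x := by positivity
  have hlam_eq : lam = 2 * x ^ 4 := by
    rw [hx, ← Real.rpow_natCast, ← Real.rpow_mul (by positivity)]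
    norm_num [mul_div_cancel₀]
  have hrpow_two_div : (2 / lam) ^ ((1 : ℝ) / 4) = x⁻¹ := by
    rw [← inv_div, Real.inv_rpow (by positivity)]
  have hrpow_eight_mul : (8 * lam) ^ ((1 : ℝ) / 4) = 2 * x := by
    rw [show 8 * lam = 2 ^ 4 * (lam / 2) by ring, Real.mul_rpow (by norm_num) (by positivity),
      ← Real.rpow_natCast, ← Real.rpow_mul (by norm_num)]
    norm_num [hx]
  subst hω
  refine ⟨fun t => ?_, ?_, ?_⟩
  · rw [deriv_deriv_const_mul_deriv_comp_mul_add hd hd' hODE, hφ₀, hrpow_two_div,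
      hrpow_eight_mul, hlam_eq]
    field_simp
    ring
  · simp [hfK']
  · rw [(hasDerivAt_const_mul_deriv_comp_mul_add hd' hODE 0).deriv, mul_zero, zero_add, hfK,
      hrpow_eight_mul]
    field_simp
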